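/- Let p ∈ (1,∞) and let A = U + iV be an n×n complex matrix (U = Re A, V = Im A entrywise) with Re⟨Aξ,ξ⟩ > 0 for all ξ ∈ ℂⁿ∖{0} (so U_s is positive definite). Then for all ζ ∈ ℂ∖{0} and ξ ∈ ℂⁿ∖{0} one has H_{F_p}^{U}[ζ;ξ] > 0, and the supremum over all ζ ∈ ℂ∖{0} and ξ ∈ ℂⁿ∖{0} of the quotient |H_{F_p}^{iV}[ζ;ξ]| / H_{F_p}^{U}[ζ;ξ] equals ‖𝒲_p(A)‖. -/

import Mathlib

open scoped BigOperators ComplexConjugate Matrix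

noncomputable section

namespace Paper

/-- The sesquilinear pairing `⟨z,w⟩ = ∑ j, z j * conj (w j)` on `ℂⁿ`. -/
def herm {n : ℕ} (z w : Fin n → ℂ) : ℂ := ∑ j, z j * conj (w j)

/-- Euclidean norm of a complex vector, `|z| = √⟨z,z⟩`. -/
def cnorm {n : ℕ} (z : Fin n → ℂ) : ℝ := Real.sqrt (herm z z).re

/-- Componentwise complex conjugate of a vector. -/
def vconj {n : ℕ} (z : Fin n → ℂ) : Fin n → ℂ := fun j => conj (z j)

/-- The ℝ-linear map `𝒥_p(α + iβ) = α/p + iβ/q`, where `1/p + 1/q = 1`,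
i.e. `1/q = 1 - 1/p`. -/
def Jmap {n : ℕ} (p : ℝ) (ξ : Fin n → ℂ) : Fin n → ℂ :=
  fun j => (((ξ j).re / p : ℝ) : ℂ) + Complex.I * (((ξ j).im * (1 - 1 / p) : ℝ) : ℂ)

/-- `Δ_p(A) = 2 · min { Re⟨Aξ, 𝒥_p ξ⟩ : ξ ∈ ℂⁿ, |ξ| = 1 }`. -/
def Deltap {n : ℕ} (p : ℝ) (A : Matrix (Fin n) (Fin n) ℂ) : ℝ :=
  sInf {t : ℝ | ∃ ξ : Fin n → ℂ, cnorm ξ = 1 ∧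
    t = 2 * (herm (A.mulVec ξ) (Jmap p ξ)).re}

/-- `Δ_r(A) = min { Re⟨Aξ,ξ⟩ − |1 − 2/r|·|⟨Aξ,ξ̄⟩| : |ξ| = 1 }`, the extension of
`Δ_p` to all `r > 0`. -/
def DeltaGen {n : ℕ} (r : ℝ) (A : Matrix (Fin n) (Fin n) ℂ) : ℝ :=
  sInf {t : ℝ | ∃ ξ : Fin n → ℂ, cnorm ξ = 1 ∧
    t = (herm (A.mulVec ξ) ξ).re - |1 - 2 / r| * ‖herm (A.mulVec ξ) (vconj ξ)‖}

/-- Membership in the class `𝒜_{λ,Λ}`: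
`Re⟨Aξ,ξ⟩ ≥ λ|ξ|²` and `|⟨Aξ,η⟩| ≤ Λ|ξ||η|`. -/
def memA {n : ℕ} (lam Lam : ℝ) (A : Matrix (Fin n) (Fin n) ℂ) : Prop :=
  (∀ ξ : Fin n → ℂ, lam * cnorm ξ ^ 2 ≤ (herm (A.mulVec ξ) ξ).re) ∧
  (∀ ξ η : Fin n → ℂ, ‖herm (A.mulVec ξ) η‖ ≤ Lam * cnorm ξ * cnorm η)

/-- `λ_A = min { Re⟨Aξ,ξ⟩ : |ξ| = 1 }`. -/
def lamA {n : ℕ} (A : Matrix (Fin n) (Fin n) ℂ) : ℝ :=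
  sInf {t : ℝ | ∃ ξ : Fin n → ℂ, cnorm ξ = 1 ∧ t = (herm (A.mulVec ξ) ξ).re}

/-- `Λ_A = max { |⟨Aξ,η⟩| : |ξ| = |η| = 1 }`. -/
def LamA {n : ℕ} (A : Matrix (Fin n) (Fin n) ℂ) : ℝ :=
  sSup {t : ℝ | ∃ ξ η : Fin n → ℂ, cnorm ξ = 1 ∧ cnorm η = 1 ∧
    t = ‖herm (A.mulVec ξ) η‖}

/-- `μ(A) = inf { Re⟨Aξ,ξ⟩/|⟨Aξ,ξ̄⟩| : ⟨Aξ,ξ̄⟩ ≠ 0 }`. -/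
def muA {n : ℕ} (A : Matrix (Fin n) (Fin n) ℂ) : ℝ :=
  sInf {t : ℝ | ∃ ξ : Fin n → ℂ, herm (A.mulVec ξ) (vconj ξ) ≠ 0 ∧
    t = (herm (A.mulVec ξ) ξ).re / ‖herm (A.mulVec ξ) (vconj ξ)‖}

/-- Second real Fréchet derivative of `F : ℂ → ℝ` at `ζ`, as a bilinear expression. -/
def D2 (F : ℂ → ℝ) (ζ : ℂ) (ξ η : ℂ) : ℝ := fderiv ℝ (fderiv ℝ F) ζ ξ η

/-- `F : ℂ → ℝ` is twice real-Fréchet differentiable at `ζ`. -/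
def TwiceDiffAt (F : ℂ → ℝ) (ζ : ℂ) : Prop :=
  DifferentiableAt ℝ F ζ ∧ DifferentiableAt ℝ (fderiv ℝ F) ζ

/-- `H_F^A[ζ;ξ] = ∑ j, D²F(ζ)[ξ_j, (Aξ)_j]`. -/
def HFA {n : ℕ} (F : ℂ → ℝ) (A : Matrix (Fin n) (Fin n) ℂ) (ζ : ℂ) (ξ : Fin n → ℂ) : ℝ :=
  ∑ j, D2 F ζ (ξ j) (A.mulVec ξ j)

/-- The power function `F_r(ζ) = |ζ|^r`. -/
def Fpow (r : ℝ) (ζ : ℂ) : ℝ := ‖ζ‖ ^ r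

/-- Real dot product. -/
def rdot {n : ℕ} (u v : Fin n → ℝ) : ℝ := ∑ j, u j * v j

/-- Euclidean norm of a real vector. -/
def enorm {n : ℕ} (u : Fin n → ℝ) : ℝ := Real.sqrt (∑ j, u j ^ 2)

/-- Operator norm `‖M‖ = max { |Mu| : |u| = 1 }` of a real matrix. -/
def opnormR {n : ℕ} (M : Matrix (Fin n) (Fin n) ℝ) : ℝ :=
  sSup {t : ℝ | ∃ u : Fin n → ℝ, enorm u = 1 ∧ t = enorm (M.mulVec u)}

/-- Symmetric part `M_s = (M + Mᵀ)/2`. -/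
def symPart {n : ℕ} {R : Type*} [Field R] (M : Matrix (Fin n) (Fin n) R) :
    Matrix (Fin n) (Fin n) R := (2 : R)⁻¹ • (M + Mᵀ)

/-- Antisymmetric part `M_a = (M − Mᵀ)/2`. -/
def antiPart {n : ℕ} {R : Type*} [Field R] (M : Matrix (Fin n) (Fin n) R) :
    Matrix (Fin n) (Fin n) R := (2 : R)⁻¹ • (M - Mᵀ)

/-- `𝒱_p(V) = ((p−2)/(2√(p−1)))·V_s + (p/(2√(p−1)))·V_a`. -/
def Vmap {n : ℕ} (p : ℝ) (V : Matrix (Fin n) (Fin n) ℝ) : Matrix (Fin n) (Fin n) ℝ :=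
  ((p - 2) / (2 * Real.sqrt (p - 1))) • symPart V + (p / (2 * Real.sqrt (p - 1))) • antiPart V

/-- A real matrix is (symmetric) positive definite. -/
def RPosDef {n : ℕ} (M : Matrix (Fin n) (Fin n) ℝ) : Prop :=
  Mᵀ = M ∧ ∀ u : Fin n → ℝ, u ≠ 0 → 0 < rdot (M.mulVec u) u

/-- The complex matrix `U + iV` built from two real matrices. -/
def cplx {n : ℕ} (U V : Matrix (Fin n) (Fin n) ℝ) : Matrix (Fin n) (Fin n) ℂ :=
  Matrix.of fun i j => ((U i j : ℂ) + Complex.I * (V i j : ℂ))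

/-- `Φ : ℂ×ℂ → ℝ` is twice real-Fréchet differentiable at `v`. -/
def TwiceDiffAt2 (Φ : ℂ × ℂ → ℝ) (v : ℂ × ℂ) : Prop :=
  DifferentiableAt ℝ Φ v ∧ DifferentiableAt ℝ (fderiv ℝ Φ) v

/-- `H_Φ^{(A,B)}[v;ω] = ∑ j, D²Φ(v)[(ω₁ⱼ, ω₂ⱼ), ((Aω₁)ⱼ, (Bω₂)ⱼ)]`. -/
def HAB {n : ℕ} (Φ : ℂ × ℂ → ℝ) (A B : Matrix (Fin n) (Fin n) ℂ) (v : ℂ × ℂ)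
    (ω₁ ω₂ : Fin n → ℂ) : ℝ :=
  ∑ j, fderiv ℝ (fderiv ℝ Φ) v (ω₁ j, ω₂ j) (A.mulVec ω₁ j, B.mulVec ω₂ j)

/-- The Nazarov–Treil Bellman function `Q_{p,δ}` (with `q = p/(p−1)` passed explicitly). -/
def QNT (p q δ : ℝ) (ζ η : ℂ) : ℝ :=
  ‖ζ‖ ^ p + ‖η‖ ^ q +
    δ * (if ‖ζ‖ ^ p ≤ ‖η‖ ^ q
      then ‖ζ‖ ^ (2 : ℝ) * ‖η‖ ^ (2 - q)
      else (2 / p) * ‖ζ‖ ^ p + (2 / q - 1) * ‖η‖ ^ q)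

/-- `Δ_p` of a matrix-valued function on a subset `Ω ⊆ ℝᵐ`:
`2 · essinf_{x∈Ω} min_{|ξ|=1} Re⟨A(x)ξ, 𝒥_p ξ⟩`. -/
def DeltapAE {m n : ℕ} (p : ℝ) (A : (Fin m → ℝ) → Matrix (Fin n) (Fin n) ℂ)
    (Ω : Set (Fin m → ℝ)) : ℝ :=
  2 * essInf (fun x => sInf {t : ℝ | ∃ ξ : Fin n → ℂ, cnorm ξ = 1 ∧
      t = (herm ((A x).mulVec ξ) (Jmap p ξ)).re}) (MeasureTheory.volume.restrict Ω)

end Paper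

/-!
Away from `0`, `D²F_p(ζ)[ξ, η] = p|ζ|^{p-2}⟨ξ, η⟩ + p(p-2)|ζ|^{p-4}⟨ζ, ξ⟩⟨ζ, η⟩` (real inner
products on `ℂ`). Multiplying `ξ` by `ζ̄` and writing `x + iy` for the result, this turns into
`H^U = p|ζ|^{p-4}((p-1)⟨x, Ux⟩ + ⟨y, Uy⟩)` and `H^{iV} = p|ζ|^{p-4}(⟨y, Vx⟩ - (p-1)⟨x, Vy⟩)`.
On real vectors accretivity of `A` says `⟨x, Ux⟩ > 0`, so `H^U > 0`. Substituting
`u = √(p-1) S x`, `v = S y` turns the ratio into `2|⟨u, 𝒲 v⟩| / (|u|² + |v|²)` with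
`𝒲 = 𝒲_p(A)`, because `Vᵀ - (p-1)V = -2√(p-1) 𝒱_p(V)`. Its supremum is `‖𝒲‖`:
`2|⟨u, 𝒲 v⟩| ≤ ‖𝒲‖(|u|² + |v|²)`, and `u = (|v| / |𝒲 v|) 𝒲 v` gives the value `|𝒲 v| / |v|`.
-/

open scoped RealInnerProductSpace

section NormRpow

variable {E : Type*} [NormedAddCommGroup E] [InnerProductSpace ℝ E]

theorem hasFDerivAt_norm_rpow_of_ne_zero (r : ℝ) {x : E} (hx : x ≠ 0) :
    HasFDerivAt (fun y : E ↦ ‖y‖ ^ r) ((r * ‖x‖ ^ (r - 2)) • innerSL ℝ x) x := by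
  apply HasStrictFDerivAt.hasFDerivAt
  convert (hasStrictFDerivAt_norm_sq x).rpow_const (p := r / 2) (by simp [hx]) using 0
  simp_rw [← Real.rpow_natCast_mul (norm_nonneg _), ← Nat.cast_smul_eq_nsmul ℝ, smul_smul]
  ring_nf

theorem fderiv_fderiv_norm_rpow_apply (p : ℝ) {x : E} (hx : x ≠ 0) (u v : E) :
    fderiv ℝ (fderiv ℝ fun y : E ↦ ‖y‖ ^ p) x u v =
      p * ‖x‖ ^ (p - 2) * ⟪u, v⟫ + p * (p - 2) * ‖x‖ ^ (p - 4) * ⟪x, u⟫ * ⟪x, v⟫ := by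
  have hfderiv : fderiv ℝ (fun y : E ↦ ‖y‖ ^ p) =ᶠ[nhds x]
      fun y ↦ (p * ‖y‖ ^ (p - 2)) • innerSL ℝ y := by
    filter_upwards [isOpen_ne.mem_nhds hx] with y hy
    exact (hasFDerivAt_norm_rpow_of_ne_zero p hy).fderiv
  have hcoeff : HasFDerivAt (fun y : E ↦ p * ‖y‖ ^ (p - 2))
      ((p * (p - 2) * ‖x‖ ^ (p - 4)) • innerSL ℝ x) x := by
    have h := (hasFDerivAt_norm_rpow_of_ne_zero (p - 2) hx).const_mul p
    rwa [smul_smul, ← mul_assoc, show p - 2 - 2 = p - 4 by ring] at h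
  have hsecond : HasFDerivAt (fun y : E ↦ (p * ‖y‖ ^ (p - 2)) • innerSL ℝ y) _ x :=
    hcoeff.smul (innerSL ℝ (E := E)).hasFDerivAt
  rw [hfderiv.fderiv_eq, hsecond.fderiv]
  simp only [add_apply, smul_apply, ContinuousLinearMap.smulRight_apply, innerSL_apply_apply,
    smul_eq_mul]
  rw [innerSL_apply_apply]

end NormRpow

section OpNorm

variable {E F : Type*} [NormedAddCommGroup E] [InnerProductSpace ℝ E]
  [NormedAddCommGroup F] [InnerProductSpace ℝ F]

theorem two_mul_abs_inner_apply_le (T : E →L[ℝ] F) (u : F) (v : E) :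
    2 * |⟪u, T v⟫| ≤ ‖T‖ * (‖u‖ ^ 2 + ‖v‖ ^ 2) :=
  calc 2 * |⟪u, T v⟫| ≤ 2 * (‖u‖ * (‖T‖ * ‖v‖)) := by
        gcongr
        exact (abs_real_inner_le_norm u (T v)).trans (by gcongr; exact T.le_opNorm v)
    _ ≤ ‖T‖ * (‖u‖ ^ 2 + ‖v‖ ^ 2) := by nlinarith [sq_nonneg (‖u‖ - ‖v‖), norm_nonneg T]

theorem sSup_two_mul_abs_inner_apply_div_eq_opNorm (T : E →L[ℝ] F) :
    sSup {t : ℝ | ∃ (u : F) (v : E), (u, v) ≠ 0 ∧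
      t = 2 * |⟪u, T v⟫| / (‖u‖ ^ 2 + ‖v‖ ^ 2)} = ‖T‖ := by
  set R := {t : ℝ | ∃ (u : F) (v : E), (u, v) ≠ 0 ∧ t = 2 * |⟪u, T v⟫| / (‖u‖ ^ 2 + ‖v‖ ^ 2)}
  have hR : ∀ t ∈ R, t ≤ ‖T‖ := by
    rintro t ⟨u, v, huv, rfl⟩
    have hden : 0 < ‖u‖ ^ 2 + ‖v‖ ^ 2 := by
      rcases not_and_or.mp (mt Prod.mk_eq_zero.mpr huv) with h | h <;>
      · have := norm_pos_iff.mpr h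
        positivity
    rw [div_le_iff₀ hden]
    exact two_mul_abs_inner_apply_le T u v
  have hR0 : 0 ≤ sSup R := Real.sSup_nonneg fun t ⟨u, v, _, ht⟩ ↦ ht ▸ by positivity
  refine le_antisymm (Real.sSup_le hR (norm_nonneg T)) (T.opNorm_le_bound hR0 fun v ↦ ?_)
  rcases eq_or_ne (T v) 0 with hTv | hTv
  · rw [hTv, norm_zero]
    positivity
  have hv : v ≠ 0 := fun hv ↦ hTv (by rw [hv, map_zero])
  have hTv' := norm_pos_iff.mpr hTv
  have hv' := norm_pos_iff.mpr hv
  have hmem : ‖T v‖ / ‖v‖ ∈ R := by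
    refine ⟨(‖v‖ / ‖T v‖) • T v, v, fun h ↦ hv (Prod.mk_eq_zero.mp h).2, ?_⟩
    rw [real_inner_smul_left, real_inner_self_eq_norm_sq, norm_smul,
      Real.norm_of_nonneg (by positivity), div_mul_cancel₀ _ hTv'.ne',
      abs_of_nonneg (by positivity)]
    field_simp
    ring
  calc ‖T v‖ = ‖T v‖ / ‖v‖ * ‖v‖ := (div_mul_cancel₀ _ hv'.ne').symm
    _ ≤ sSup R * ‖v‖ := by gcongr; exact le_csSup ⟨_, hR⟩ hmem

end OpNorm

namespace Paper

variable {n : ℕ}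

theorem HFA_Fpow_eq_sum (p : ℝ) (A : Matrix (Fin n) (Fin n) ℂ) {ζ : ℂ} (hζ : ζ ≠ 0)
    (ξ : Fin n → ℂ) :
    HFA (Fpow p) A ζ ξ = p * ‖ζ‖ ^ (p - 4) *
      ∑ j, ((p - 1) * ((star ζ • ξ) j).re * ((A *ᵥ (star ζ • ξ)) j).re
        + ((star ζ • ξ) j).im * ((A *ᵥ (star ζ • ξ)) j).im) := by
  have hpow : ‖ζ‖ ^ (p - 2) = ‖ζ‖ ^ (p - 4) * ‖ζ‖ ^ 2 := by
    rw [← Real.rpow_natCast, ← Real.rpow_add (norm_pos_iff.mpr hζ)]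
    ring_nf
  rw [HFA, Finset.mul_sum]
  refine Finset.sum_congr rfl fun j _ ↦ ?_
  rw [D2, show Fpow p = fun z : ℂ ↦ ‖z‖ ^ p from rfl, fderiv_fderiv_norm_rpow_apply p hζ, hpow,
    Matrix.mulVec_smul]
  simp only [Complex.inner, Pi.smul_apply, smul_eq_mul, Complex.mul_re, Complex.mul_im,
    Complex.conj_re, Complex.conj_im, Complex.star_def, Complex.sq_norm, Complex.normSq_apply]
  ring

theorem HFA_Fpow_eq_mul_HFA_one (p : ℝ) (A : Matrix (Fin n) (Fin n) ℂ) {ζ : ℂ} (hζ : ζ ≠ 0)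
    (ξ : Fin n → ℂ) :
    HFA (Fpow p) A ζ ξ = ‖ζ‖ ^ (p - 4) * HFA (Fpow p) A 1 (star ζ • ξ) := by
  rw [HFA_Fpow_eq_sum p A hζ, HFA_Fpow_eq_sum p A one_ne_zero, star_one, one_smul, norm_one,
    Real.one_rpow]
  ring

theorem re_comp_cplx_mulVec (U V : Matrix (Fin n) (Fin n) ℝ) (ω : Fin n → ℂ) :
    Complex.re ∘ (cplx U V *ᵥ ω) = U *ᵥ (Complex.re ∘ ω) - V *ᵥ (Complex.im ∘ ω) := by
  ext j
  simp only [Function.comp_apply, cplx, Matrix.mulVec, dotProduct, Matrix.of_apply,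
    Complex.re_sum, Pi.sub_apply, ← Finset.sum_sub_distrib, Complex.mul_re, Complex.add_re,
    Complex.add_im, Complex.ofReal_re, Complex.ofReal_im, Complex.I_re, Complex.I_im,
    Complex.mul_im]
  exact Finset.sum_congr rfl fun k _ ↦ by ring

theorem im_comp_cplx_mulVec (U V : Matrix (Fin n) (Fin n) ℝ) (ω : Fin n → ℂ) :
    Complex.im ∘ (cplx U V *ᵥ ω) = U *ᵥ (Complex.im ∘ ω) + V *ᵥ (Complex.re ∘ ω) := by
  ext j
  simp only [Function.comp_apply, cplx, Matrix.mulVec, dotProduct, Matrix.of_apply,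
    Complex.im_sum, Pi.add_apply, ← Finset.sum_add_distrib, Complex.mul_re, Complex.add_re,
    Complex.add_im, Complex.ofReal_re, Complex.ofReal_im, Complex.I_re, Complex.I_im,
    Complex.mul_im]
  exact Finset.sum_congr rfl fun k _ ↦ by ring

theorem HFA_Fpow_one_cplx (p : ℝ) (U V : Matrix (Fin n) (Fin n) ℝ) (ω : Fin n → ℂ) :
    HFA (Fpow p) (cplx U V) 1 ω =
      p * ((p - 1) * (Complex.re ∘ ω ⬝ᵥ (U *ᵥ (Complex.re ∘ ω) - V *ᵥ (Complex.im ∘ ω)))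
        + Complex.im ∘ ω ⬝ᵥ (U *ᵥ (Complex.im ∘ ω) + V *ᵥ (Complex.re ∘ ω))) := by
  rw [HFA_Fpow_eq_sum p _ one_ne_zero, star_one, one_smul, norm_one, Real.one_rpow, mul_one,
    ← re_comp_cplx_mulVec, ← im_comp_cplx_mulVec]
  simp only [dotProduct, Finset.mul_sum, ← Finset.sum_add_distrib, Function.comp_apply]
  exact Finset.sum_congr rfl fun j _ ↦ by ring

theorem HFA_Fpow_one_cplx_zero_right (p : ℝ) (U : Matrix (Fin n) (Fin n) ℝ) (ω : Fin n → ℂ) :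
    HFA (Fpow p) (cplx U 0) 1 ω =
      p * ((p - 1) * Complex.re ∘ ω ⬝ᵥ U *ᵥ (Complex.re ∘ ω)
        + Complex.im ∘ ω ⬝ᵥ U *ᵥ (Complex.im ∘ ω)) := by
  simp only [HFA_Fpow_one_cplx, Matrix.zero_mulVec, sub_zero, add_zero]

theorem HFA_Fpow_one_cplx_zero_left (p : ℝ) (V : Matrix (Fin n) (Fin n) ℝ) (ω : Fin n → ℂ) :
    HFA (Fpow p) (cplx 0 V) 1 ω =
      p * (Complex.im ∘ ω ⬝ᵥ V *ᵥ (Complex.re ∘ ω)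
        - (p - 1) * Complex.re ∘ ω ⬝ᵥ V *ᵥ (Complex.im ∘ ω)) := by
  simp only [HFA_Fpow_one_cplx, Matrix.zero_mulVec, zero_sub, zero_add, dotProduct_neg]
  ring

theorem re_herm (z w : Fin n → ℂ) :
    (herm z w).re = Complex.re ∘ z ⬝ᵥ Complex.re ∘ w + Complex.im ∘ z ⬝ᵥ Complex.im ∘ w := by
  simp only [herm, Complex.re_sum, dotProduct, ← Finset.sum_add_distrib, Complex.mul_re,
    Complex.conj_re, Complex.conj_im, Function.comp_apply]
  exact Finset.sum_congr rfl fun j _ ↦ by ring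

theorem re_comp_eq_zero_and_im_comp_eq_zero_iff {ι : Type*} {ω : ι → ℂ} :
    Complex.re ∘ ω = 0 ∧ Complex.im ∘ ω = 0 ↔ ω = 0 := by
  simp only [funext_iff, Function.comp_apply, Pi.zero_apply, ← forall_and, Complex.ext_iff,
    Complex.zero_re, Complex.zero_im]

theorem dotProduct_mulVec_pos_of_accretive {U V : Matrix (Fin n) (Fin n) ℝ}
    (hA : ∀ ξ : Fin n → ℂ, ξ ≠ 0 → 0 < (herm (cplx U V *ᵥ ξ) ξ).re)
    {x : Fin n → ℝ} (hx : x ≠ 0) : 0 < x ⬝ᵥ U *ᵥ x := by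
  have hre : Complex.re ∘ (Complex.ofReal ∘ x) = x := funext fun j ↦ Complex.ofReal_re _
  have him : Complex.im ∘ (Complex.ofReal ∘ x) = 0 := funext fun j ↦ Complex.ofReal_im _
  have hξ : Complex.ofReal ∘ x ≠ 0 := fun h ↦ hx (by rw [← hre, h]; rfl)
  have h := hA _ hξ
  rwa [re_herm, re_comp_cplx_mulVec, im_comp_cplx_mulVec, hre, him, Matrix.mulVec_zero,
    sub_zero, dotProduct_zero, add_zero, dotProduct_comm] at h

theorem dotProduct_mulVec_nonneg_of_accretive {U V : Matrix (Fin n) (Fin n) ℝ}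
    (hA : ∀ ξ : Fin n → ℂ, ξ ≠ 0 → 0 < (herm (cplx U V *ᵥ ξ) ξ).re)
    (x : Fin n → ℝ) : 0 ≤ x ⬝ᵥ U *ᵥ x := by
  rcases eq_or_ne x 0 with rfl | hx
  · simp
  · exact (dotProduct_mulVec_pos_of_accretive hA hx).le

theorem HFA_Fpow_cplx_zero_right_pos {p : ℝ} (hp : 1 < p) {U V : Matrix (Fin n) (Fin n) ℝ}
    (hA : ∀ ξ : Fin n → ℂ, ξ ≠ 0 → 0 < (herm (cplx U V *ᵥ ξ) ξ).re)
    {ζ : ℂ} (hζ : ζ ≠ 0) {ξ : Fin n → ℂ} (hξ : ξ ≠ 0) :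
    0 < HFA (Fpow p) (cplx U 0) ζ ξ := by
  set ω := star ζ • ξ
  have hω : ω ≠ 0 := smul_ne_zero (star_ne_zero.mpr hζ) hξ
  rw [HFA_Fpow_eq_mul_HFA_one p _ hζ, HFA_Fpow_one_cplx_zero_right]
  have hform : 0 < (p - 1) * Complex.re ∘ ω ⬝ᵥ U *ᵥ (Complex.re ∘ ω)
      + Complex.im ∘ ω ⬝ᵥ U *ᵥ (Complex.im ∘ ω) := by
    have hx := dotProduct_mulVec_nonneg_of_accretive hA (Complex.re ∘ ω)
    have hy := dotProduct_mulVec_nonneg_of_accretive hA (Complex.im ∘ ω)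
    rcases not_and_or.mp (mt re_comp_eq_zero_and_im_comp_eq_zero_iff.mp hω) with h | h <;>
      nlinarith [dotProduct_mulVec_pos_of_accretive hA h]
  have := norm_pos_iff.mpr hζ
  positivity

def hessRatio (p : ℝ) (U V : Matrix (Fin n) (Fin n) ℝ) (x y : Fin n → ℝ) : ℝ :=
  |y ⬝ᵥ V *ᵥ x - (p - 1) * x ⬝ᵥ V *ᵥ y| / ((p - 1) * x ⬝ᵥ U *ᵥ x + y ⬝ᵥ U *ᵥ y)

theorem abs_HFA_div_HFA_eq_hessRatio {p : ℝ} (hp : 0 < p) (U V : Matrix (Fin n) (Fin n) ℝ)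
    {ζ : ℂ} (hζ : ζ ≠ 0) (ξ : Fin n → ℂ) :
    |HFA (Fpow p) (cplx 0 V) ζ ξ| / HFA (Fpow p) (cplx U 0) ζ ξ =
      hessRatio p U V (Complex.re ∘ (star ζ • ξ)) (Complex.im ∘ (star ζ • ξ)) := by
  have hζp : 0 < ‖ζ‖ ^ (p - 4) := Real.rpow_pos_of_pos (norm_pos_iff.mpr hζ) _
  rw [HFA_Fpow_eq_mul_HFA_one p _ hζ, HFA_Fpow_eq_mul_HFA_one p _ hζ, HFA_Fpow_one_cplx_zero_right,
    HFA_Fpow_one_cplx_zero_left, abs_mul, abs_mul, abs_of_pos hζp, abs_of_pos hp,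
    mul_div_mul_left _ _ hζp.ne', mul_div_mul_left _ _ hp.ne', hessRatio]

theorem setOf_abs_HFA_div_HFA_eq {p : ℝ} (hp : 0 < p) (U V : Matrix (Fin n) (Fin n) ℝ) :
    {t : ℝ | ∃ ζ : ℂ, ζ ≠ 0 ∧ ∃ ξ : Fin n → ℂ, ξ ≠ 0 ∧
        t = |HFA (Fpow p) (cplx 0 V) ζ ξ| / HFA (Fpow p) (cplx U 0) ζ ξ} =
      {t : ℝ | ∃ x y : Fin n → ℝ, (x, y) ≠ 0 ∧ t = hessRatio p U V x y} := by
  ext t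
  constructor
  · rintro ⟨ζ, hζ, ξ, hξ, rfl⟩
    refine ⟨_, _, ?_, abs_HFA_div_HFA_eq_hessRatio hp U V hζ ξ⟩
    rw [Ne, Prod.mk_eq_zero, re_comp_eq_zero_and_im_comp_eq_zero_iff]
    exact smul_ne_zero (star_ne_zero.mpr hζ) hξ
  · rintro ⟨x, y, hxy, rfl⟩
    refine ⟨1, one_ne_zero, fun j ↦ ⟨x j, y j⟩, ?_, ?_⟩
    · rw [Ne, ← re_comp_eq_zero_and_im_comp_eq_zero_iff]
      exact mt Prod.mk_eq_zero.mpr hxy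
    · rw [abs_HFA_div_HFA_eq_hessRatio hp U V one_ne_zero, star_one, one_smul]
      rfl

theorem RPosDef.isUnit_det {S : Matrix (Fin n) (Fin n) ℝ} (hS : RPosDef S) : IsUnit S.det := by
  refine isUnit_iff_ne_zero.mpr fun h0 ↦ ?_
  obtain ⟨v, hv, hSv⟩ := Matrix.exists_mulVec_eq_zero_iff.mpr h0
  simpa [rdot, hSv] using hS.2 v hv

theorem dotProduct_symPart_mulVec_self (U : Matrix (Fin n) (Fin n) ℝ) (x : Fin n → ℝ) :
    x ⬝ᵥ symPart U *ᵥ x = x ⬝ᵥ U *ᵥ x := by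
  rw [symPart, Matrix.smul_mulVec, dotProduct_smul, Matrix.add_mulVec, dotProduct_add,
    Matrix.mulVec_transpose, dotProduct_comm x (x ᵥ* U), ← Matrix.dotProduct_mulVec, smul_eq_mul]
  ring

theorem mulVec_dotProduct_of_transpose_eq {S : Matrix (Fin n) (Fin n) ℝ} (hS : Sᵀ = S)
    (x w : Fin n → ℝ) : S *ᵥ x ⬝ᵥ w = x ⬝ᵥ S *ᵥ w := by
  rw [dotProduct_comm, Matrix.dotProduct_mulVec, ← Matrix.mulVec_transpose, hS, dotProduct_comm]

theorem dotProduct_mulVec_self_eq_of_mul_self_eq_symPart {S U : Matrix (Fin n) (Fin n) ℝ}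
    (hS : Sᵀ = S) (hSU : S * S = symPart U) (x : Fin n → ℝ) :
    x ⬝ᵥ U *ᵥ x = S *ᵥ x ⬝ᵥ S *ᵥ x := by
  rw [← dotProduct_symPart_mulVec_self, ← hSU, ← Matrix.mulVec_mulVec,
    mulVec_dotProduct_of_transpose_eq hS]

theorem transpose_sub_smul_eq_smul_Vmap {p : ℝ} (hp : 1 < p) (V : Matrix (Fin n) (Fin n) ℝ) :
    Vᵀ - (p - 1) • V = (-2 * √(p - 1)) • Vmap p V := by
  have hq : √(p - 1) ≠ 0 := (Real.sqrt_pos.mpr (sub_pos.mpr hp)).ne'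
  ext i j
  simp only [Vmap, symPart, antiPart, Matrix.sub_apply, Matrix.add_apply, Matrix.smul_apply,
    Matrix.transpose_apply, smul_eq_mul]
  field_simp
  ring

theorem hessRatio_eq {p : ℝ} (hp : 1 < p) {U S : Matrix (Fin n) (Fin n) ℝ}
    (V : Matrix (Fin n) (Fin n) ℝ) (hS : Sᵀ = S) (hdet : IsUnit S.det)
    (hSU : S * S = symPart U) (x y : Fin n → ℝ) :
    hessRatio p U V x y =
      2 * |(√(p - 1) • S *ᵥ x) ⬝ᵥ (S⁻¹ * Vmap p V * S⁻¹) *ᵥ (S *ᵥ y)|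
        / ((√(p - 1) • S *ᵥ x) ⬝ᵥ (√(p - 1) • S *ᵥ x) + S *ᵥ y ⬝ᵥ S *ᵥ y) := by
  have hsq : √(p - 1) * √(p - 1) = p - 1 := Real.mul_self_sqrt (sub_pos.mpr hp).le
  have hcancel : (S⁻¹ * Vmap p V * S⁻¹) *ᵥ (S *ᵥ y) = S⁻¹ *ᵥ (Vmap p V *ᵥ y) := by
    rw [Matrix.mulVec_mulVec, Matrix.mul_assoc, Matrix.nonsing_inv_mul S hdet, Matrix.mul_one,
      Matrix.mulVec_mulVec]
  have hbilin : y ⬝ᵥ V *ᵥ x - (p - 1) * x ⬝ᵥ V *ᵥ y = x ⬝ᵥ (Vᵀ - (p - 1) • V) *ᵥ y := by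
    rw [Matrix.sub_mulVec, dotProduct_sub, Matrix.smul_mulVec, dotProduct_smul, smul_eq_mul,
      Matrix.mulVec_transpose, Matrix.dotProduct_mulVec y V x, dotProduct_comm (y ᵥ* V)]
  have hnum : y ⬝ᵥ V *ᵥ x - (p - 1) * x ⬝ᵥ V *ᵥ y =
      -2 * ((√(p - 1) • S *ᵥ x) ⬝ᵥ (S⁻¹ * Vmap p V * S⁻¹) *ᵥ (S *ᵥ y)) := by
    rw [hbilin, transpose_sub_smul_eq_smul_Vmap hp, hcancel, smul_dotProduct,
      mulVec_dotProduct_of_transpose_eq hS, Matrix.mulVec_mulVec, Matrix.mul_nonsing_inv S hdet,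
      Matrix.one_mulVec, Matrix.smul_mulVec, dotProduct_smul, smul_eq_mul, smul_eq_mul]
    ring
  rw [hessRatio, hnum, dotProduct_mulVec_self_eq_of_mul_self_eq_symPart hS hSU,
    dotProduct_mulVec_self_eq_of_mul_self_eq_symPart hS hSU]
  simp only [smul_dotProduct, dotProduct_smul, smul_eq_mul]
  rw [← mul_assoc (√(p - 1)) (√(p - 1)), hsq, abs_mul, abs_neg, abs_two]

theorem setOf_hessRatio_eq {p : ℝ} (hp : 1 < p) {U S : Matrix (Fin n) (Fin n) ℝ}
    (V : Matrix (Fin n) (Fin n) ℝ) (hS : RPosDef S) (hSU : S * S = symPart U) :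
    {t : ℝ | ∃ x y : Fin n → ℝ, (x, y) ≠ 0 ∧ t = hessRatio p U V x y} =
      {t : ℝ | ∃ u v : Fin n → ℝ, (u, v) ≠ 0 ∧
        t = 2 * |u ⬝ᵥ (S⁻¹ * Vmap p V * S⁻¹) *ᵥ v| / (u ⬝ᵥ u + v ⬝ᵥ v)} := by
  have hdet := hS.isUnit_det
  have hq : √(p - 1) ≠ 0 := (Real.sqrt_pos.mpr (sub_pos.mpr hp)).ne'
  have hinj : Function.Injective S.mulVec :=
    Matrix.mulVec_injective_iff_isUnit.mpr ((Matrix.isUnit_iff_isUnit_det S).mpr hdet)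
  have hSinv (w : Fin n → ℝ) : S *ᵥ (S⁻¹ *ᵥ w) = w := by
    rw [Matrix.mulVec_mulVec, Matrix.mul_nonsing_inv S hdet, Matrix.one_mulVec]
  ext t
  constructor
  · rintro ⟨x, y, hxy, rfl⟩
    refine ⟨_, _, fun h ↦ hxy ?_, hessRatio_eq hp V hS.1 hdet hSU x y⟩
    obtain ⟨hx, hy⟩ := Prod.mk_eq_zero.mp h
    rw [smul_eq_zero_iff_right hq, ← Matrix.mulVec_zero S] at hx
    rw [← Matrix.mulVec_zero S] at hy
    rw [hinj hx, hinj hy, Prod.mk_zero_zero]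
  · rintro ⟨u, v, huv, rfl⟩
    have hu : √(p - 1) • S *ᵥ ((√(p - 1))⁻¹ • S⁻¹ *ᵥ u) = u := by
      rw [Matrix.mulVec_smul, hSinv, smul_smul, mul_inv_cancel₀ hq, one_smul]
    refine ⟨(√(p - 1))⁻¹ • S⁻¹ *ᵥ u, S⁻¹ *ᵥ v, fun h ↦ huv ?_, ?_⟩
    · obtain ⟨hx, hy⟩ := Prod.mk_eq_zero.mp h
      rw [← hu, ← hSinv v, hx, hy, Matrix.mulVec_zero, smul_zero, Prod.mk_zero_zero]
    · rw [hessRatio_eq hp V hS.1 hdet hSU, hu, hSinv]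

theorem enorm_eq_norm_toLp (u : Fin n → ℝ) : Paper.enorm u = ‖WithLp.toLp 2 u‖ := by
  simp [Paper.enorm, EuclideanSpace.norm_eq]

theorem opnormR_eq_norm_toEuclideanCLM (M : Matrix (Fin n) (Fin n) ℝ) :
    opnormR M = ‖Matrix.toEuclideanCLM (𝕜 := ℝ) M‖ := by
  rw [← ContinuousLinearMap.sSup_sphere_eq_norm, opnormR]
  congr 1
  ext t
  constructor
  · rintro ⟨u, hu, rfl⟩
    exact ⟨WithLp.toLp 2 u, by simpa [enorm_eq_norm_toLp] using hu, by simp [enorm_eq_norm_toLp]⟩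
  · rintro ⟨x, hx, rfl⟩
    refine ⟨WithLp.ofLp x, by simpa [enorm_eq_norm_toLp] using hx, ?_⟩
    rw [enorm_eq_norm_toLp, ← Matrix.ofLp_toEuclideanCLM, WithLp.toLp_ofLp]

theorem sSup_two_mul_abs_dotProduct_mulVec_div_eq_opnormR (W : Matrix (Fin n) (Fin n) ℝ) :
    sSup {t : ℝ | ∃ u v : Fin n → ℝ, (u, v) ≠ 0 ∧
      t = 2 * |u ⬝ᵥ W *ᵥ v| / (u ⬝ᵥ u + v ⬝ᵥ v)} = opnormR W := by
  have hsq (u : Fin n → ℝ) : ‖WithLp.toLp 2 u‖ ^ 2 = u ⬝ᵥ u := by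
    rw [← real_inner_self_eq_norm_sq, EuclideanSpace.inner_toLp_toLp, star_trivial]
  rw [opnormR_eq_norm_toEuclideanCLM, ← sSup_two_mul_abs_inner_apply_div_eq_opNorm]
  congr 1
  ext t
  constructor
  · rintro ⟨u, v, huv, rfl⟩
    refine ⟨WithLp.toLp 2 u, WithLp.toLp 2 v, by simpa using huv, ?_⟩
    rw [Matrix.inner_toEuclideanCLM, hsq, hsq]
  · rintro ⟨u, v, huv, rfl⟩
    refine ⟨WithLp.ofLp u, WithLp.ofLp v, by simpa using huv, ?_⟩
    rw [Matrix.inner_toEuclideanCLM, ← hsq, ← hsq, WithLp.toLp_ofLp, WithLp.toLp_ofLp]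

end Paper

/-- for accretive `A = U + iV`, `H_{F_p}^U[ζ;ξ] > 0` for `ζ ≠ 0`, `ξ ≠ 0`,
and `sup |H_{F_p}^{iV}[ζ;ξ]| / H_{F_p}^U[ζ;ξ] = ‖𝒲_p(A)‖`. -/
theorem statement7 (n : ℕ) (p : ℝ) (hp : 1 < p)
    (U V : Matrix (Fin n) (Fin n) ℝ)
    (hA : ∀ ξ : Fin n → ℂ, ξ ≠ 0 → 0 < (Paper.herm ((Paper.cplx U V).mulVec ξ) ξ).re) :
    (∀ ζ : ℂ, ζ ≠ 0 → ∀ ξ : Fin n → ℂ, ξ ≠ 0 →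
      0 < Paper.HFA (Paper.Fpow p) (Paper.cplx U 0) ζ ξ) ∧
    ∀ S : Matrix (Fin n) (Fin n) ℝ, Paper.RPosDef S → S * S = Paper.symPart U →
      sSup {t : ℝ | ∃ ζ : ℂ, ζ ≠ 0 ∧ ∃ ξ : Fin n → ℂ, ξ ≠ 0 ∧
          t = |Paper.HFA (Paper.Fpow p) (Paper.cplx 0 V) ζ ξ| /
              Paper.HFA (Paper.Fpow p) (Paper.cplx U 0) ζ ξ}
        = Paper.opnormR (S⁻¹ * Paper.Vmap p V * S⁻¹) := by
  refine ⟨fun ζ hζ ξ hξ ↦ Paper.HFA_Fpow_cplx_zero_right_pos hp hA hζ hξ, fun S hS hSU ↦ ?_⟩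
  rw [Paper.setOf_abs_HFA_div_HFA_eq (zero_lt_one.trans hp), Paper.setOf_hessRatio_eq hp V hS hSU,
    Paper.sSup_two_mul_abs_dotProduct_mulVec_div_eq_opnormR]
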